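/- Given a positive definite density matrix ρ₁₂₃ on H₁⊗H₂⊗H₃ with marginals ρ₁₂, ρ₂₃, ρ₁, ρ₂, ρ₃, and a compatible pair (ρ̃₁₂, ρ̃₂₃), the operator ρ̃₁₂₃ := ρ₁₂₃ + (ρ̃₁₂ − ρ₁₂)⊗ρ̃₃ + ρ̃₁⊗(ρ̃₂₃ − ρ₂₃) + ρ̃₁⊗(ρ₂ − ρ̃₂)⊗ρ̃₃ is Hermitian of trace 1 and satisfies Tr₃ ρ̃₁₂₃ = ρ̃₁₂ and Tr₁ ρ̃₁₂₃ = ρ̃₂₃, where ρ̃₁ = Tr₂ ρ̃₁₂, ρ̃₂ = Tr₁ ρ̃₁₂ = Tr₃ ρ̃₂₃, ρ̃₃ = Tr₂ ρ̃₂₃. -/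

import Mathlib

open Matrix Kronecker BigOperators
open scoped ComplexOrder
noncomputable section

/-- A density matrix: positive semidefinite with trace one. -/
def IsDensityMatrix {n : Type*} [Fintype n] (ρ : Matrix n n ℂ) : Prop :=
  ρ.PosSemidef ∧ ρ.trace = 1

/-- Partial trace over the second (right) tensor factor. -/
def ptraceRight {A B : Type*} [Fintype B] (ρ : Matrix (A × B) (A × B) ℂ) :
    Matrix A A ℂ :=
  Matrix.of fun x y => ∑ k, ρ (x, k) (y, k)

/-- Partial trace over the first (left) tensor factor. -/
def ptraceLeft {A B : Type*} [Fintype A] (ρ : Matrix (A × B) (A × B) ℂ) :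
    Matrix B B ℂ :=
  Matrix.of fun x y => ∑ k, ρ (k, x) (k, y)

/-- Partial trace over the first factor of a tripartite state indexed by `(A × B) × C`. -/
def ptrace1of3 {A B C : Type*} [Fintype A]
    (ρ : Matrix ((A × B) × C) ((A × B) × C) ℂ) : Matrix (B × C) (B × C) ℂ :=
  Matrix.of fun x y => ∑ j, ρ ((j, x.1), x.2) ((j, y.1), y.2)

/-- Partial trace over the first and third factors. -/
def ptrace13 {A B C : Type*} [Fintype A] [Fintype C]
    (ρ : Matrix ((A × B) × C) ((A × B) × C) ℂ) : Matrix B B ℂ :=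
  Matrix.of fun x y => ∑ j, ∑ k, ρ ((j, x), k) ((j, y), k)

/-- The von Neumann entropy `S(ρ) = -Tr (ρ log ρ)`, computed via eigenvalues. -/
def vnEntropy {n : Type*} [Fintype n] [DecidableEq n] (ρ : Matrix n n ℂ) : ℝ :=
  if h : ρ.IsHermitian then -∑ i, h.eigenvalues i * Real.log (h.eigenvalues i) else 0

/-- The tensor product M ⊗ N of M on H₁ and N on H₂⊗H₃, indexed by (A × B) × C. -/
def kron1of3 {A B C : Type*} (M : Matrix A A ℂ) (N : Matrix (B × C) (B × C) ℂ) :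
    Matrix ((A × B) × C) ((A × B) × C) ℂ :=
  Matrix.of fun x y => M x.1.1 y.1.1 * N (x.1.2, x.2) (y.1.2, y.2)

/-!
Partial traces are linear and trace out the matching factor of a tensor product. Tracing out
`H₃` therefore turns the four terms of `ρ̃₁₂₃` into `ρ₁₂`, `ρ̃₁₂ - ρ₁₂`, `ρ̃₁ ⊗ (ρ̃₂ - ρ₂)` and
`ρ̃₁ ⊗ (ρ₂ - ρ̃₂)` (by compatibility and `Tr ρ̃₃ = 1`), which sum to `ρ̃₁₂`; symmetrically
for `H₁`. Then `Tr ρ̃₁₂₃ = Tr (Tr₃ ρ̃₁₂₃) = Tr ρ̃₁₂ = 1`, and Hermiticity is inherited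
term by term.
-/

namespace Matrix

variable {R l m n p : Type*}

theorem sub_kronecker [NonUnitalNonAssocRing R] (M N : Matrix l m R) (P : Matrix n p R) :
    (M - N) ⊗ₖ P = M ⊗ₖ P - N ⊗ₖ P := by
  ext; simp [sub_mul]

theorem kronecker_sub [NonUnitalNonAssocRing R] (M : Matrix l m R) (N P : Matrix n p R) :
    M ⊗ₖ (N - P) = M ⊗ₖ N - M ⊗ₖ P := by
  ext; simp [mul_sub]

theorem IsHermitian.kronecker [CommMagma R] [StarMul R] {M : Matrix l l R}
    {N : Matrix n n R} (hM : M.IsHermitian) (hN : N.IsHermitian) : (M ⊗ₖ N).IsHermitian := by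
  rw [IsHermitian, conjTranspose_kronecker, hM, hN]

end Matrix

section PartialTrace

variable {A B C : Type*}

theorem ptraceRight_add [Fintype B] (M N : Matrix (A × B) (A × B) ℂ) :
    ptraceRight (M + N) = ptraceRight M + ptraceRight N := by
  ext; simp [ptraceRight, Finset.sum_add_distrib]

theorem ptraceRight_sub [Fintype B] (M N : Matrix (A × B) (A × B) ℂ) :
    ptraceRight (M - N) = ptraceRight M - ptraceRight N := by
  ext; simp [ptraceRight, Finset.sum_sub_distrib]

theorem ptrace1of3_add [Fintype A] (M N : Matrix ((A × B) × C) ((A × B) × C) ℂ) :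
    ptrace1of3 (M + N) = ptrace1of3 M + ptrace1of3 N := by
  ext; simp [ptrace1of3, Finset.sum_add_distrib]

theorem ptrace1of3_sub [Fintype A] (M N : Matrix ((A × B) × C) ((A × B) × C) ℂ) :
    ptrace1of3 (M - N) = ptrace1of3 M - ptrace1of3 N := by
  ext; simp [ptrace1of3, Finset.sum_sub_distrib]

theorem Matrix.IsHermitian.ptraceRight [Fintype B] {M : Matrix (A × B) (A × B) ℂ}
    (h : M.IsHermitian) : (ptraceRight M).IsHermitian := by
  ext x y
  simp only [conjTranspose_apply, _root_.ptraceRight, of_apply, star_sum, h.apply]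

theorem Matrix.IsHermitian.ptraceLeft [Fintype A] {M : Matrix (A × B) (A × B) ℂ}
    (h : M.IsHermitian) : (ptraceLeft M).IsHermitian := by
  ext x y
  simp only [conjTranspose_apply, _root_.ptraceLeft, of_apply, star_sum, h.apply]

theorem Matrix.IsHermitian.ptrace1of3 [Fintype A] {M : Matrix ((A × B) × C) ((A × B) × C) ℂ}
    (h : M.IsHermitian) : (ptrace1of3 M).IsHermitian := by
  ext x y
  simp only [conjTranspose_apply, _root_.ptrace1of3, of_apply, star_sum, h.apply]

theorem Matrix.IsHermitian.kron1of3 {M : Matrix A A ℂ} {N : Matrix (B × C) (B × C) ℂ}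
    (hM : M.IsHermitian) (hN : N.IsHermitian) : (kron1of3 M N).IsHermitian := by
  ext x y
  simp only [conjTranspose_apply, _root_.kron1of3, of_apply, star_mul', hM.apply, hN.apply]

theorem trace_ptraceRight [Fintype A] [Fintype B] (M : Matrix (A × B) (A × B) ℂ) :
    (ptraceRight M).trace = M.trace := by
  simp only [trace, ptraceRight, diag, of_apply, Fintype.sum_prod_type]

theorem trace_ptraceLeft [Fintype A] [Fintype B] (M : Matrix (A × B) (A × B) ℂ) :
    (ptraceLeft M).trace = M.trace := by
  simp only [trace, ptraceLeft, diag, of_apply, Fintype.sum_prod_type]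
  exact Finset.sum_comm

theorem ptraceRight_kronecker [Fintype C] (M : Matrix (A × B) (A × B) ℂ) (N : Matrix C C ℂ) :
    ptraceRight (M ⊗ₖ N) = N.trace • M := by
  ext
  simp [ptraceRight, trace, Finset.mul_sum, mul_comm]

theorem ptraceRight_kron1of3 [Fintype C] (M : Matrix A A ℂ) (N : Matrix (B × C) (B × C) ℂ) :
    ptraceRight (kron1of3 M N) = M ⊗ₖ ptraceRight N := by
  ext
  simp [ptraceRight, kron1of3, Finset.mul_sum]

theorem ptrace1of3_kronecker [Fintype A] (M : Matrix (A × B) (A × B) ℂ) (N : Matrix C C ℂ) :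
    ptrace1of3 (M ⊗ₖ N) = ptraceLeft M ⊗ₖ N := by
  ext
  simp [ptrace1of3, ptraceLeft, Finset.sum_mul]

theorem ptrace1of3_kron1of3 [Fintype A] (M : Matrix A A ℂ) (N : Matrix (B × C) (B × C) ℂ) :
    ptrace1of3 (kron1of3 M N) = M.trace • N := by
  ext
  simp [ptrace1of3, kron1of3, trace, Finset.sum_mul]

theorem ptraceLeft_kronecker [Fintype A] (M : Matrix A A ℂ) (N : Matrix B B ℂ) :
    ptraceLeft (M ⊗ₖ N) = M.trace • N := by
  ext
  simp [ptraceLeft, trace, Finset.sum_mul]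

theorem ptraceRight_ptrace1of3 [Fintype A] [Fintype C]
    (M : Matrix ((A × B) × C) ((A × B) × C) ℂ) :
    ptraceRight (ptrace1of3 M) = ptraceLeft (ptraceRight M) := by
  ext
  simp only [ptraceRight, ptraceLeft, ptrace1of3, of_apply]
  exact Finset.sum_comm

end PartialTrace

theorem stmt3_general {A B C : Type*} [Fintype A] [Fintype B] [Fintype C]
    (ρ₁₂₃ : Matrix ((A × B) × C) ((A × B) × C) ℂ)
    (h123 : IsDensityMatrix ρ₁₂₃)
    (t12 : Matrix (A × B) (A × B) ℂ) (t23 : Matrix (B × C) (B × C) ℂ)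
    (ht12 : IsDensityMatrix t12) (ht23 : IsDensityMatrix t23)
    (hcomp : ptraceLeft t12 = ptraceRight t23)
    (E : Matrix ((A × B) × C) ((A × B) × C) ℂ)
    (hE : E = ρ₁₂₃ + (t12 - ptraceRight ρ₁₂₃) ⊗ₖ ptraceLeft t23
        + kron1of3 (ptraceRight t12) (t23 - ptrace1of3 ρ₁₂₃)
        + (ptraceRight t12 ⊗ₖ (ptraceLeft (ptraceRight ρ₁₂₃) - ptraceLeft t12))
            ⊗ₖ ptraceLeft t23) :
    E.IsHermitian ∧ E.trace = 1 ∧ ptraceRight E = t12 ∧ ptrace1of3 E = t23 := by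
  obtain ⟨⟨hρ, -⟩, -⟩ := h123
  obtain ⟨⟨h12, -⟩, htr12⟩ := ht12
  obtain ⟨⟨h23, -⟩, htr23⟩ := ht23
  have htr1 : (ptraceRight t12).trace = 1 := (trace_ptraceRight t12).trans htr12
  have htr3 : (ptraceLeft t23).trace = 1 := (trace_ptraceLeft t23).trans htr23
  have hmarg12 : ptraceRight E = t12 := by
    rw [hE]
    simp only [ptraceRight_add, ptraceRight_sub, ptraceRight_kronecker, ptraceRight_kron1of3,
      htr3, one_smul, kronecker_sub, ptraceRight_ptrace1of3, ← hcomp]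
    abel
  have hmarg23 : ptrace1of3 E = t23 := by
    rw [hE]
    simp only [ptrace1of3_add, ptrace1of3_sub, ptrace1of3_kronecker, ptrace1of3_kron1of3,
      ptraceLeft_kronecker, htr1, one_smul, sub_kronecker]
    abel
  refine ⟨?_, by rw [← trace_ptraceRight, hmarg12, htr12], hmarg12, hmarg23⟩
  rw [hE]
  exact ((hρ.add ((h12.sub hρ.ptraceRight).kronecker h23.ptraceLeft)).add
    (h12.ptraceRight.kron1of3 (h23.sub hρ.ptrace1of3))).add
    ((h12.ptraceRight.kronecker (hρ.ptraceRight.ptraceLeft.sub h12.ptraceLeft)).kronecker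
      h23.ptraceLeft)

/-- The explicit perturbed extension is Hermitian, has trace 1, and has the prescribed
marginals. -/
theorem stmt3 {A B C : Type*} [Fintype A] [Fintype B] [Fintype C]
    (ρ₁₂₃ : Matrix ((A × B) × C) ((A × B) × C) ℂ)
    (h123 : IsDensityMatrix ρ₁₂₃) (hpd : ρ₁₂₃.PosDef)
    (t12 : Matrix (A × B) (A × B) ℂ) (t23 : Matrix (B × C) (B × C) ℂ)
    (ht12 : IsDensityMatrix t12) (ht23 : IsDensityMatrix t23)
    (hcomp : ptraceLeft t12 = ptraceRight t23)
    (E : Matrix ((A × B) × C) ((A × B) × C) ℂ)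
    (hE : E = ρ₁₂₃ + (t12 - ptraceRight ρ₁₂₃) ⊗ₖ ptraceLeft t23
        + kron1of3 (ptraceRight t12) (t23 - ptrace1of3 ρ₁₂₃)
        + (ptraceRight t12 ⊗ₖ (ptraceLeft (ptraceRight ρ₁₂₃) - ptraceLeft t12))
            ⊗ₖ ptraceLeft t23) :
    E.IsHermitian ∧ E.trace = 1 ∧ ptraceRight E = t12 ∧ ptrace1of3 E = t23 :=
  stmt3_general ρ₁₂₃ h123 t12 t23 ht12 ht23 hcomp E hE
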